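/- arXiv:2509.23306 — 2 statements merged into one kernel-verified Lean document; each statement's English description precedes it below -/
import Mathlib

section
/- Let U ∈ ℝ, μ > 0, D > 0, L > 0. Let φ and ψ be twice continuously differentiable functions on ℝ × [0,∞) with compact support, let w be four times continuously differentiable and v twice continuously differentiable on [0,L], and assume the boundary/compatibility conditions: w(0) = w'(0) = 0, v(0) = v'(0) = 0, w''(L) = w'''(L) = 0, ψ(x,0) = 0 for x ∉ [0,L], and ∂_zφ(x,0) = v(x) for x ∈ (0,L). Define the components of 𝔸y by 𝔸₁ = −U∂ₓφ + ψ, 𝔸₂ = Δφ − μφ − U∂ₓψ, 𝔸₃ = v, 𝔸₄ = −D w'''' + ψ(·,0) on (0,L), and define the inner product ⟨(a₁,a₂,a₃,a₄), (φ,ψ,w,v)⟩_Y = ∫_{ℝ×(0,∞)} ( ∇a₁·∇φ + μ a₁ φ + a₂ ψ ) dx dz + D ∫₀^L a₃'' w'' dx + ∫₀^L a₄ v dx. Then ⟨𝔸y, y⟩_Y = 0, i.e. ∫_{ℝ×(0,∞)} ( ∇(−U∂ₓφ + ψ)·∇φ + μ(−U∂ₓφ + ψ)φ + (Δφ − μφ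 − U∂ₓψ)ψ ) dx dz + D ∫₀^L v'' w'' dx + ∫₀^L ( −D w'''' + ψ(x,0) ) v dx = 0. -/
open MeasureTheory Real Set intervalIntegral

/-- The open upper half-plane `ℝ²₊ = ℝ × (0,∞)`, as a subset of `ℝ × ℝ`. -/
def upperHalfPlane2 : Set (ℝ × ℝ) := {p : ℝ × ℝ | 0 < p.2}

/-- The partial derivative in the first (horizontal) variable of `f : ℝ × ℝ → ℝ`. -/
noncomputable def pX (f : ℝ × ℝ → ℝ) : ℝ × ℝ → ℝ := fun p => deriv (fun x => f (x, p.2)) p.1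

/-- The partial derivative in the second (vertical) variable of `f : ℝ × ℝ → ℝ`. -/
noncomputable def pZ (f : ℝ × ℝ → ℝ) : ℝ × ℝ → ℝ := fun p => deriv (fun z => f (p.1, z)) p.2

/-!
On the flow side the integrand is an exact divergence `∂ₓF + ∂_z G`, with
`F = -(U/2)(|∇φ|² + μφ² + ψ²) + ψ ∂ₓφ` and `G = ψ ∂_zφ`; this uses `∂_z∂ₓφ = ∂ₓ∂_zφ`. For compactly
supported `F, G` the half-plane integral of the divergence is the boundary flux `-∫ G(x,0) dx`, which
by the Kutta–Joukowsky and Neumann conditions equals `-∫₀^L ψ(x,0) v dx` and cancels the coupling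
term. On the beam side two integrations by parts turn `∫₀^L v w''''` into `∫₀^L v'' w''`, the boundary
terms vanishing by the clamped conditions on `v` at `0` and the free conditions on `w` at `L`.
-/

section PartialDerivatives

variable {f : ℝ × ℝ → ℝ}

lemma hasDerivAt_pX (hf : Differentiable ℝ f) (p : ℝ × ℝ) :
    HasDerivAt (fun x => f (x, p.2)) (pX f p) p.1 :=
  (hf.comp (differentiable_id.prodMk (differentiable_const _)) p.1).hasDerivAt

lemma hasDerivAt_pZ (hf : Differentiable ℝ f) (p : ℝ × ℝ) :
    HasDerivAt (fun z => f (p.1, z)) (pZ f p) p.2 :=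
  (hf.comp ((differentiable_const _).prodMk differentiable_id) p.2).hasDerivAt

lemma pX_eq_fderiv (hf : Differentiable ℝ f) : pX f = fun p => fderiv ℝ f p (1, 0) := by
  funext p
  exact ((hf p).hasFDerivAt.comp_hasDerivAt p.1
    ((hasDerivAt_id p.1).prodMk (hasDerivAt_const p.1 p.2))).deriv

lemma pZ_eq_fderiv (hf : Differentiable ℝ f) : pZ f = fun p => fderiv ℝ f p (0, 1) := by
  funext p
  exact ((hf p).hasFDerivAt.comp_hasDerivAt p.2
    ((hasDerivAt_const p.2 p.1).prodMk (hasDerivAt_id p.2))).deriv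

lemma ContDiff.pX {m n : WithTop ℕ∞} (hf : ContDiff ℝ n f) (hmn : m + 1 ≤ n) :
    ContDiff ℝ m (pX f) := by
  rw [pX_eq_fderiv ((hf.of_le (le_add_self.trans hmn)).differentiable one_ne_zero)]
  exact (hf.fderiv_right hmn).clm_apply contDiff_const

lemma ContDiff.pZ {m n : WithTop ℕ∞} (hf : ContDiff ℝ n f) (hmn : m + 1 ≤ n) :
    ContDiff ℝ m (pZ f) := by
  rw [pZ_eq_fderiv ((hf.of_le (le_add_self.trans hmn)).differentiable one_ne_zero)]
  exact (hf.fderiv_right hmn).clm_apply contDiff_const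

lemma HasCompactSupport.pX (hf : Differentiable ℝ f) (hs : HasCompactSupport f) :
    HasCompactSupport (pX f) := by
  rw [pX_eq_fderiv hf]
  exact (hs.fderiv ℝ).comp_left (g := fun T : (ℝ × ℝ) →L[ℝ] ℝ => T (1, 0)) rfl

lemma HasCompactSupport.pZ (hf : Differentiable ℝ f) (hs : HasCompactSupport f) :
    HasCompactSupport (pZ f) := by
  rw [pZ_eq_fderiv hf]
  exact (hs.fderiv ℝ).comp_left (g := fun T : (ℝ × ℝ) →L[ℝ] ℝ => T (0, 1)) rfl

lemma pZ_pX_eq_pX_pZ (hf : ContDiff ℝ 2 f) : pZ (pX f) = pX (pZ f) := by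
  have hf' : Differentiable ℝ (fderiv ℝ f) :=
    (hf.fderiv_right (m := 1) (by norm_num)).differentiable one_ne_zero
  have hd : Differentiable ℝ f := hf.differentiable two_ne_zero
  funext p
  rw [pX_eq_fderiv hd, pZ_eq_fderiv hd, pZ_eq_fderiv (hf'.clm_apply (differentiable_const _)),
    pX_eq_fderiv (hf'.clm_apply (differentiable_const _))]
  simp only [fderiv_clm_apply (hf' p) (differentiableAt_const _), fderiv_const_apply,
    ContinuousLinearMap.comp_zero, zero_add, ContinuousLinearMap.flip_apply]
  exact (hf.contDiffAt.isSymmSndFDerivAt (by simp)) _ _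

end PartialDerivatives

section Slices

variable {X Y M : Type*} [TopologicalSpace X] [TopologicalSpace Y] [Zero M] {F : X × Y → M}

lemma HasCompactSupport.comp_prodMk_right [T1Space Y] (hs : HasCompactSupport F) (y : Y) :
    HasCompactSupport (fun x => F (x, y)) :=
  hs.comp_isClosedEmbedding ⟨isEmbedding_prodMkLeft y, (isClosedMap_prodMk_right y).isClosed_range⟩

lemma HasCompactSupport.comp_prodMk_left [T1Space X] (hs : HasCompactSupport F) (x : X) :
    HasCompactSupport (fun y => F (x, y)) :=
  hs.comp_isClosedEmbedding ⟨isEmbedding_prodMkRight x, (isClosedMap_prodMk_left x).isClosed_range⟩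

end Slices

lemma HasCompactSupport.integral_deriv_eq_zero {E : Type*} [NormedAddCommGroup E] [NormedSpace ℝ E]
    {g : ℝ → E} (hg : ContDiff ℝ 1 g) (hs : HasCompactSupport g) : ∫ x, deriv g x = 0 :=
  integral_eq_zero_of_hasDerivAt_of_integrable
    (fun x => (hg.differentiable one_ne_zero x).hasDerivAt)
    ((hg.continuous_deriv le_rfl).integrable_of_hasCompactSupport hs.deriv)
    (hg.continuous.integrable_of_hasCompactSupport hs)

lemma volume_restrict_upperHalfPlane2 :
    volume.restrict upperHalfPlane2 = (volume : Measure ℝ).prod (volume.restrict (Ioi 0)) := by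
  have : upperHalfPlane2 = univ ×ˢ Ioi 0 := by ext p; simp [upperHalfPlane2]
  rw [this, Measure.volume_eq_prod, ← Measure.prod_restrict, Measure.restrict_univ]

section HalfPlaneIntegrals

variable {F : ℝ × ℝ → ℝ}

lemma integrableOn_upperHalfPlane2_pX (hF : ContDiff ℝ 1 F) (hs : HasCompactSupport F) :
    IntegrableOn (pX F) upperHalfPlane2 :=
  ((hF.pX (m := 0) le_rfl).continuous.integrable_of_hasCompactSupport
    (hs.pX (hF.differentiable one_ne_zero))).integrableOn

lemma integrableOn_upperHalfPlane2_pZ (hF : ContDiff ℝ 1 F) (hs : HasCompactSupport F) :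
    IntegrableOn (pZ F) upperHalfPlane2 :=
  ((hF.pZ (m := 0) le_rfl).continuous.integrable_of_hasCompactSupport
    (hs.pZ (hF.differentiable one_ne_zero))).integrableOn

lemma integral_upperHalfPlane2_pX (hF : ContDiff ℝ 1 F) (hs : HasCompactSupport F) :
    ∫ q in upperHalfPlane2, pX F q = 0 := by
  have hint := integrableOn_upperHalfPlane2_pX hF hs
  rw [IntegrableOn, volume_restrict_upperHalfPlane2] at hint
  rw [volume_restrict_upperHalfPlane2, integral_prod_symm _ hint]
  have hslice (z : ℝ) : ∫ x, pX F (x, z) = 0 :=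
    (hs.comp_prodMk_right z).integral_deriv_eq_zero (hF.comp (contDiff_id.prodMk contDiff_const))
  simp [hslice]

lemma integral_upperHalfPlane2_pZ (hF : ContDiff ℝ 1 F) (hs : HasCompactSupport F) :
    ∫ q in upperHalfPlane2, pZ F q = -∫ x, F (x, 0) := by
  have hint := integrableOn_upperHalfPlane2_pZ hF hs
  rw [IntegrableOn, volume_restrict_upperHalfPlane2] at hint
  rw [volume_restrict_upperHalfPlane2, integral_prod _ hint, ← MeasureTheory.integral_neg]
  congr 1 with x
  exact (hs.comp_prodMk_left x).integral_Ioi_deriv_eq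
    (hF.comp (contDiff_const.prodMk contDiff_id)) 0

end HalfPlaneIntegrals

lemma integral_upperHalfPlane2_pX_add_pZ {F G : ℝ × ℝ → ℝ} (hF : ContDiff ℝ 1 F)
    (hFs : HasCompactSupport F) (hG : ContDiff ℝ 1 G) (hGs : HasCompactSupport G) :
    ∫ q in upperHalfPlane2, (pX F q + pZ G q) = -∫ x, G (x, 0) := by
  rw [integral_add (integrableOn_upperHalfPlane2_pX hF hFs) (integrableOn_upperHalfPlane2_pZ hG hGs),
    integral_upperHalfPlane2_pX hF hFs, integral_upperHalfPlane2_pZ hG hGs, zero_add]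

-- The flow components `𝔸₁`, `𝔸₂` of the generator.
noncomputable def flowGen₁ (U : ℝ) (φ ψ : ℝ × ℝ → ℝ) : ℝ × ℝ → ℝ :=
  fun q => -U * pX φ q + ψ q

noncomputable def flowGen₂ (U μ : ℝ) (φ ψ : ℝ × ℝ → ℝ) : ℝ × ℝ → ℝ :=
  fun q => (pX (pX φ) q + pZ (pZ φ) q) - μ * φ q - U * pX ψ q

noncomputable def flowFluxX (U μ : ℝ) (φ ψ : ℝ × ℝ → ℝ) : ℝ × ℝ → ℝ :=
  fun q => -U / 2 * (pX φ q ^ 2 + pZ φ q ^ 2 + μ * φ q ^ 2 + ψ q ^ 2) + ψ q * pX φ q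

noncomputable def flowFluxZ (φ ψ : ℝ × ℝ → ℝ) : ℝ × ℝ → ℝ :=
  fun q => ψ q * pZ φ q

section Flow

variable {φ ψ : ℝ × ℝ → ℝ}

lemma flow_integrand_eq_pX_add_pZ (U μ : ℝ) (hφ : ContDiff ℝ 2 φ) (hψ : ContDiff ℝ 1 ψ)
    (p : ℝ × ℝ) :
    pX (flowGen₁ U φ ψ) p * pX φ p + pZ (flowGen₁ U φ ψ) p * pZ φ p
        + μ * flowGen₁ U φ ψ p * φ p + flowGen₂ U μ φ ψ p * ψ p
      = pX (flowFluxX U μ φ ψ) p + pZ (flowFluxZ φ ψ) p := by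
  have hφd : Differentiable ℝ φ := hφ.differentiable two_ne_zero
  have hψd : Differentiable ℝ ψ := hψ.differentiable one_ne_zero
  have hφXd : Differentiable ℝ (pX φ) := (hφ.pX (m := 1) le_rfl).differentiable one_ne_zero
  have hφZd : Differentiable ℝ (pZ φ) := (hφ.pZ (m := 1) le_rfl).differentiable one_ne_zero
  have hgen₁X : pX (flowGen₁ U φ ψ) p = -U * pX (pX φ) p + pX ψ p :=
    (((hasDerivAt_pX hφXd p).const_mul (-U)).add (hasDerivAt_pX hψd p)).deriv
  have hgen₁Z : pZ (flowGen₁ U φ ψ) p = -U * pZ (pX φ) p + pZ ψ p :=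
    (((hasDerivAt_pZ hφXd p).const_mul (-U)).add (hasDerivAt_pZ hψd p)).deriv
  have hfluxX : pX (flowFluxX U μ φ ψ) p =
      -U / 2 * (2 * pX φ p * pX (pX φ) p + 2 * pZ φ p * pX (pZ φ) p
          + μ * (2 * φ p * pX φ p) + 2 * ψ p * pX ψ p)
        + (pX ψ p * pX φ p + ψ p * pX (pX φ) p) := by
    have hφX := hasDerivAt_pX hφXd p
    have hψX := hasDerivAt_pX hψd p
    have h := ((((hφX.fun_pow 2).add ((hasDerivAt_pX hφZd p).fun_pow 2)).add
      (((hasDerivAt_pX hφd p).fun_pow 2).const_mul μ)).add (hψX.fun_pow 2)).const_mul (-U / 2)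
      |>.add (hψX.mul hφX)
    simp only [Prod.mk.eta] at h
    exact (h.congr_deriv (by ring)).deriv
  have hfluxZ : pZ (flowFluxZ φ ψ) p = pZ ψ p * pZ φ p + ψ p * pZ (pZ φ) p :=
    ((hasDerivAt_pZ hψd p).mul (hasDerivAt_pZ hφZd p)).deriv
  rw [hgen₁X, hgen₁Z, hfluxX, hfluxZ, pZ_pX_eq_pX_pZ hφ, flowGen₁, flowGen₂]
  ring

lemma contDiff_flowFluxX (U μ : ℝ) (hφ : ContDiff ℝ 2 φ) (hψ : ContDiff ℝ 1 ψ) :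
    ContDiff ℝ 1 (flowFluxX U μ φ ψ) := by
  have hφX := hφ.pX (m := 1) le_rfl
  have hφZ := hφ.pZ (m := 1) le_rfl
  have hφ1 : ContDiff ℝ 1 φ := hφ.of_le one_le_two
  unfold flowFluxX
  fun_prop

lemma contDiff_flowFluxZ (hφ : ContDiff ℝ 2 φ) (hψ : ContDiff ℝ 1 ψ) :
    ContDiff ℝ 1 (flowFluxZ φ ψ) :=
  hψ.mul (hφ.pZ le_rfl)

lemma hasCompactSupport_flowFluxX (U μ : ℝ) (hφ : Differentiable ℝ φ) (hφs : HasCompactSupport φ)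
    (hψs : HasCompactSupport ψ) : HasCompactSupport (flowFluxX U μ φ ψ) := by
  have hsq {g : ℝ × ℝ → ℝ} (hg : HasCompactSupport g) : HasCompactSupport (fun q => g q ^ 2) :=
    hg.comp_left (g := fun t : ℝ => t ^ 2) (zero_pow two_ne_zero)
  have hsum : HasCompactSupport
      (fun q => pX φ q ^ 2 + pZ φ q ^ 2 + μ * φ q ^ 2 + ψ q ^ 2) :=
    (((hsq (hφs.pX hφ)).add (hsq (hφs.pZ hφ))).add (hsq hφs).mul_left).add (hsq hψs)
  exact hsum.mul_left.add hψs.mul_right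

lemma hasCompactSupport_flowFluxZ (hψs : HasCompactSupport ψ) :
    HasCompactSupport (flowFluxZ φ ψ) :=
  hψs.mul_right

lemma integral_flow_eq_neg_boundary (U μ : ℝ) (hφ : ContDiff ℝ 2 φ)
    (hψ : ContDiff ℝ 1 ψ) (hφs : HasCompactSupport φ) (hψs : HasCompactSupport ψ) :
    ∫ q in upperHalfPlane2, (pX (flowGen₁ U φ ψ) q * pX φ q + pZ (flowGen₁ U φ ψ) q * pZ φ q
        + μ * flowGen₁ U φ ψ q * φ q + flowGen₂ U μ φ ψ q * ψ q)
      = -∫ x, ψ (x, 0) * pZ φ (x, 0) := by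
  simp_rw [flow_integrand_eq_pX_add_pZ U μ hφ hψ]
  exact integral_upperHalfPlane2_pX_add_pZ (contDiff_flowFluxX U μ hφ hψ)
    (hasCompactSupport_flowFluxX U μ (hφ.differentiable two_ne_zero) hφs hψs)
    (contDiff_flowFluxZ hφ hψ) (hasCompactSupport_flowFluxZ hψs)

end Flow

lemma integral_eq_intervalIntegral_of_eqOn_Ioo {f g : ℝ → ℝ} {a b : ℝ} (hab : a ≤ b)
    (hf : ∀ x ∉ Icc a b, f x = 0) (hfg : EqOn f g (Ioo a b)) :
    ∫ x, f x = ∫ x in a..b, g x := by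
  rw [← setIntegral_eq_integral_of_forall_compl_eq_zero hf, integral_Icc_eq_integral_Ioo,
    intervalIntegral.integral_of_le hab, integral_Ioc_eq_integral_Ioo]
  exact setIntegral_congr_fun measurableSet_Ioo hfg

lemma integral_mul_deriv_deriv_eq_deriv_deriv_mul {u v : ℝ → ℝ} {a b : ℝ}
    (hu : ContDiff ℝ 2 u) (hv : ContDiff ℝ 2 v) (hva : v a = 0) (hv'a : deriv v a = 0)
    (hub : u b = 0) (hu'b : deriv u b = 0) :
    ∫ x in a..b, v x * deriv (deriv u) x = ∫ x in a..b, deriv (deriv v) x * u x := by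
  have hu₁ : ContDiff ℝ 1 u := hu.of_le one_le_two
  have hv₁ : ContDiff ℝ 1 v := hv.of_le one_le_two
  have hu' : ContDiff ℝ 1 (deriv u) := hu.deriv'
  have hv' : ContDiff ℝ 1 (deriv v) := hv.deriv'
  have hderiv {g : ℝ → ℝ} (hg : ContDiff ℝ 1 g) (x : ℝ) : HasDerivAt g (deriv g x) x :=
    (hg.differentiable one_ne_zero x).hasDerivAt
  have hint {g : ℝ → ℝ} (hg : ContDiff ℝ 1 g) : IntervalIntegrable (deriv g) volume a b :=
    (hg.continuous_deriv le_rfl).intervalIntegrable a b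
  rw [integral_mul_deriv_eq_deriv_mul (fun x _ => hderiv hv₁ x) (fun x _ => hderiv hu' x)
      (hint hv₁) (hint hu'),
    integral_mul_deriv_eq_deriv_mul (fun x _ => hderiv hv' x) (fun x _ => hderiv hu₁ x)
      (hint hv') (hint hu₁),
    hva, hv'a, hub, hu'b]
  ring

theorem statement12_general
    (U μ D L : ℝ) (hL : 0 < L)
    (φ ψ : ℝ × ℝ → ℝ)
    (hφ : ContDiff ℝ 2 φ) (hψ : ContDiff ℝ 2 ψ)
    (hφsupp : HasCompactSupport φ) (hψsupp : HasCompactSupport ψ)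
    (w v : ℝ → ℝ) (hw : ContDiff ℝ 4 w) (hv : ContDiff ℝ 2 v)
    (hv0 : v 0 = 0) (hv0' : deriv v 0 = 0)
    (hwL : deriv (deriv w) L = 0) (hwL' : deriv (deriv (deriv w)) L = 0)
    (hKJC : ∀ x : ℝ, x ∉ Icc (0:ℝ) L → ψ (x, 0) = 0)
    (hNeumann : ∀ x ∈ Ioo (0:ℝ) L, pZ φ (x, 0) = v x)
    (A₁ A₂ : ℝ × ℝ → ℝ)
    (hA₁ : ∀ q, A₁ q = -U * pX φ q + ψ q)
    (hA₂ : ∀ q, A₂ q = (pX (pX φ) q + pZ (pZ φ) q) - μ * φ q - U * pX ψ q) :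
    (∫ q in upperHalfPlane2,
        (pX A₁ q * pX φ q + pZ A₁ q * pZ φ q + μ * A₁ q * φ q + A₂ q * ψ q))
      + D * (∫ x in (0:ℝ)..L, deriv (deriv v) x * deriv (deriv w) x)
      + (∫ x in (0:ℝ)..L, (-(D * deriv (deriv (deriv (deriv w))) x) + ψ (x, 0)) * v x)
      = 0 := by
  obtain rfl : A₁ = flowGen₁ U φ ψ := funext hA₁
  obtain rfl : A₂ = flowGen₂ U μ φ ψ := funext hA₂
  have hflow := integral_flow_eq_neg_boundary U μ hφ (hψ.of_le one_le_two) hφsupp hψsupp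
  rw [integral_eq_intervalIntegral_of_eqOn_Ioo (g := fun x => ψ (x, 0) * v x) hL.le
      (fun x hx => by rw [hKJC x hx, zero_mul])
      (fun x hx => by rw [hNeumann x hx])] at hflow
  have hw'' : ContDiff ℝ 2 (deriv (deriv w)) := hw.iterate_deriv' 2 2
  have hbeam := integral_mul_deriv_deriv_eq_deriv_deriv_mul hw'' hv hv0 hv0' hwL hwL'
  have hψ₀ : Continuous fun x => ψ (x, 0) :=
    hψ.continuous.comp (continuous_id.prodMk continuous_const)
  have hw₄ : Continuous (deriv (deriv (deriv (deriv w)))) := hw''.deriv'.continuous_deriv le_rfl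
  have hcoupling : ∫ x in (0:ℝ)..L, (-(D * deriv (deriv (deriv (deriv w))) x) + ψ (x, 0)) * v x
      = (∫ x in (0:ℝ)..L, ψ (x, 0) * v x)
        - D * ∫ x in (0:ℝ)..L, v x * deriv (deriv (deriv (deriv w))) x := by
    rw [← intervalIntegral.integral_const_mul, ← intervalIntegral.integral_sub
      ((hψ₀.fun_mul hv.continuous).intervalIntegrable 0 L)
      ((continuous_const.fun_mul (hv.continuous.fun_mul hw₄)).intervalIntegrable 0 L)]
    congr 1 with x
    ring
  rw [hflow, hcoupling, hbeam]
  ring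

/-- Dissipativity (conservativity) computation for the generator `𝔸` of the
decoupled linearized flow–beam dynamics: with `𝔸₁ = −U∂ₓφ + ψ`, `𝔸₂ = Δφ − μφ − U∂ₓψ`,
`𝔸₃ = v`, `𝔸₄ = −Dw'''' + ψ(·,0)`, the Kutta–Joukowsky condition `ψ(x,0) = 0` off `[0,L]`,
the Neumann coupling `∂_zφ(x,0) = v` on `(0,L)`, and the clamped–free boundary conditions,
one has `⟨𝔸y, y⟩_Y = 0`. -/
theorem statement12
    (U μ D L : ℝ) (hμ : 0 < μ) (hD : 0 < D) (hL : 0 < L)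
    (φ ψ : ℝ × ℝ → ℝ)
    (hφ : ContDiff ℝ 2 φ) (hψ : ContDiff ℝ 2 ψ)
    (hφsupp : HasCompactSupport φ) (hψsupp : HasCompactSupport ψ)
    (w v : ℝ → ℝ) (hw : ContDiff ℝ 4 w) (hv : ContDiff ℝ 2 v)
    (hw0 : w 0 = 0) (hw0' : deriv w 0 = 0)
    (hv0 : v 0 = 0) (hv0' : deriv v 0 = 0)
    (hwL : deriv (deriv w) L = 0) (hwL' : deriv (deriv (deriv w)) L = 0)
    (hKJC : ∀ x : ℝ, x ∉ Icc (0:ℝ) L → ψ (x, 0) = 0)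
    (hNeumann : ∀ x ∈ Ioo (0:ℝ) L, pZ φ (x, 0) = v x)
    (A₁ A₂ : ℝ × ℝ → ℝ)
    (hA₁ : ∀ q, A₁ q = -U * pX φ q + ψ q)
    (hA₂ : ∀ q, A₂ q = (pX (pX φ) q + pZ (pZ φ) q) - μ * φ q - U * pX ψ q) :
    (∫ q in upperHalfPlane2,
        (pX A₁ q * pX φ q + pZ A₁ q * pZ φ q + μ * A₁ q * φ q + A₂ q * ψ q))
      + D * (∫ x in (0:ℝ)..L, deriv (deriv v) x * deriv (deriv w) x)
      + (∫ x in (0:ℝ)..L, (-(D * deriv (deriv (deriv (deriv w))) x) + ψ (x, 0)) * v x)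
      = 0 :=
  statement12_general U μ D L hL φ ψ hφ hψ hφsupp hψsupp w v hw hv hv0 hv0' hwL hwL' hKJC hNeumann
    A₁ A₂ hA₁ hA₂
end

section
/- Let D > 0, δ ≥ 0, L > 0, T > 0, let f be continuous on [0,L] × [0,T], and let w be a smooth function on [0,L] × [0,T] satisfying w_tt + D∂ₓ⁴w + δ∂ₓ⁴w_t = f on (0,L) × (0,T), with the clamped–free boundary conditions w(0,t) = ∂ₓw(0,t) = 0 and ∂ₓ²w(L,t) = ∂ₓ³w(L,t) = 0 for all t ∈ [0,T]. Then for every t ∈ (0,T): d/dt [ ½ ∫₀^L w_xxt² dx + (D/2) ∫₀^L (∂ₓ⁴w)² dx ] + δ ∫₀^L (∂ₓ⁴w_t)² dx = ∫₀^L f · ∂ₓ⁴w_t dx. -/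
open MeasureTheory Real Set intervalIntegral

/-- Partial derivative in the spatial variable `x` of `w : (x,t) ↦ w(x,t)`. -/
noncomputable def dX (w : ℝ → ℝ → ℝ) : ℝ → ℝ → ℝ := fun x t => deriv (fun y => w y t) x

/-- Partial derivative in the time variable `t` of `w : (x,t) ↦ w(x,t)`. -/
noncomputable def dT (w : ℝ → ℝ → ℝ) : ℝ → ℝ → ℝ := fun x t => deriv (fun s => w x s) t

namespace Stmt14

variable {u : ℝ → ℝ → ℝ}

lemma hasDerivAt_dX (hu : ContDiff ℝ (⊤ : ℕ∞) fun q : ℝ × ℝ => u q.1 q.2) (x t : ℝ) :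
    HasDerivAt (fun y => u y t) (dX u x t) x := by
  have h1 : HasDerivAt (fun y : ℝ => ((y, t) : ℝ × ℝ)) (1, 0) x :=
    (hasDerivAt_id x).prodMk (hasDerivAt_const x t)
  have h2 := ((hu.differentiable (by simp)) (x, t)).hasFDerivAt
  have h3 : HasDerivAt (fun y => u y t) (fderiv ℝ (fun q : ℝ × ℝ => u q.1 q.2) (x, t) (1, 0)) x := by
    have := h2.comp_hasDerivAt x h1; exact this
  simp only [dX]; rw [h3.deriv]; exact h3

lemma hasDerivAt_dT (hu : ContDiff ℝ (⊤ : ℕ∞) fun q : ℝ × ℝ => u q.1 q.2) (x t : ℝ) :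
    HasDerivAt (fun s => u x s) (dT u x t) t := by
  have h1 : HasDerivAt (fun s : ℝ => ((x, s) : ℝ × ℝ)) (0, 1) t :=
    (hasDerivAt_const t x).prodMk (hasDerivAt_id t)
  have h2 := ((hu.differentiable (by simp)) (x, t)).hasFDerivAt
  have h3 : HasDerivAt (fun s => u x s) (fderiv ℝ (fun q : ℝ × ℝ => u q.1 q.2) (x, t) (0, 1)) t :=
    h2.comp_hasDerivAt t h1
  simp only [dT]; rw [h3.deriv]; exact h3

lemma dX_eq_fderiv (hu : ContDiff ℝ (⊤ : ℕ∞) fun q : ℝ × ℝ => u q.1 q.2) (x t : ℝ) :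
    dX u x t = fderiv ℝ (fun q : ℝ × ℝ => u q.1 q.2) (x, t) (1, 0) := by
  have h1 : HasDerivAt (fun y : ℝ => ((y, t) : ℝ × ℝ)) (1, 0) x :=
    (hasDerivAt_id x).prodMk (hasDerivAt_const x t)
  have h2 := ((hu.differentiable (by simp)) (x, t)).hasFDerivAt
  have h3 : HasDerivAt (fun y => u y t) (fderiv ℝ (fun q : ℝ × ℝ => u q.1 q.2) (x, t) (1, 0)) x := by
    have := h2.comp_hasDerivAt x h1; exact this
  simp only [dX]; exact h3.deriv

lemma dT_eq_fderiv (hu : ContDiff ℝ (⊤ : ℕ∞) fun q : ℝ × ℝ => u q.1 q.2) (x t : ℝ) :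
    dT u x t = fderiv ℝ (fun q : ℝ × ℝ => u q.1 q.2) (x, t) (0, 1) := by
  have h1 : HasDerivAt (fun s : ℝ => ((x, s) : ℝ × ℝ)) (0, 1) t :=
    (hasDerivAt_const t x).prodMk (hasDerivAt_id t)
  have h2 := ((hu.differentiable (by simp)) (x, t)).hasFDerivAt
  have h3 : HasDerivAt (fun s => u x s) (fderiv ℝ (fun q : ℝ × ℝ => u q.1 q.2) (x, t) (0, 1)) t :=
    h2.comp_hasDerivAt t h1
  simp only [dT]; exact h3.deriv

lemma contDiff_dX (hu : ContDiff ℝ (⊤ : ℕ∞) fun q : ℝ × ℝ => u q.1 q.2) :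
    ContDiff ℝ (⊤ : ℕ∞) fun q : ℝ × ℝ => dX u q.1 q.2 := by
  have h : (fun q : ℝ × ℝ => dX u q.1 q.2)
      = fun q : ℝ × ℝ => fderiv ℝ (fun q : ℝ × ℝ => u q.1 q.2) q (1, 0) := by
    funext q
    exact dX_eq_fderiv hu q.1 q.2
  rw [h]
  exact (hu.fderiv_right (by simp)).clm_apply contDiff_const

lemma contDiff_dT (hu : ContDiff ℝ (⊤ : ℕ∞) fun q : ℝ × ℝ => u q.1 q.2) :
    ContDiff ℝ (⊤ : ℕ∞) fun q : ℝ × ℝ => dT u q.1 q.2 := by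
  have h : (fun q : ℝ × ℝ => dT u q.1 q.2)
      = fun q : ℝ × ℝ => fderiv ℝ (fun q : ℝ × ℝ => u q.1 q.2) q (0, 1) := by
    funext q
    exact dT_eq_fderiv hu q.1 q.2
  rw [h]
  exact (hu.fderiv_right (by simp)).clm_apply contDiff_const

lemma dX_dT_comm (hu : ContDiff ℝ (⊤ : ℕ∞) fun q : ℝ × ℝ => u q.1 q.2) :
    dX (dT u) = dT (dX u) := by
  funext x t
  set U : ℝ × ℝ → ℝ := fun q => u q.1 q.2 with hU
  set G : ℝ × ℝ → (ℝ × ℝ) →L[ℝ] ℝ := fderiv ℝ U with hG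
  have hGsm : ContDiff ℝ (⊤ : ℕ∞) G := hu.fderiv_right (by simp)
  have hGd : HasFDerivAt G (fderiv ℝ G (x, t)) (x, t) :=
    ((hGsm.differentiable (by simp)) (x, t)).hasFDerivAt
  have hsym : ∀ v w : ℝ × ℝ, fderiv ℝ G (x, t) v w = fderiv ℝ G (x, t) w v :=
    second_derivative_symmetric (fun y => ((hu.differentiable (by simp)) y).hasFDerivAt) hGd
  -- LHS : dX (dT u) x t = fderiv G (x,t) (1,0) (0,1)
  have h1 : HasDerivAt (fun y : ℝ => ((y, t) : ℝ × ℝ)) (1, 0) x :=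
    (hasDerivAt_id x).prodMk (hasDerivAt_const x t)
  have h2 : HasDerivAt (fun s : ℝ => ((x, s) : ℝ × ℝ)) (0, 1) t :=
    (hasDerivAt_const t x).prodMk (hasDerivAt_id t)
  have hgx : HasDerivAt (fun y : ℝ => G (y, t)) (fderiv ℝ G (x, t) (1, 0)) x :=
    hGd.comp_hasDerivAt x h1
  have hgt : HasDerivAt (fun s : ℝ => G (x, s)) (fderiv ℝ G (x, t) (0, 1)) t :=
    hGd.comp_hasDerivAt t h2
  have hLx : HasDerivAt (fun y : ℝ => G (y, t) (0, 1))
      (fderiv ℝ G (x, t) (1, 0) (0, 1)) x := by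
    have := hgx.clm_apply (hasDerivAt_const x ((0:ℝ), (1:ℝ)))
    simpa using this
  have hLt : HasDerivAt (fun s : ℝ => G (x, s) (1, 0))
      (fderiv ℝ G (x, t) (0, 1) (1, 0)) t := by
    have := hgt.clm_apply (hasDerivAt_const t ((1:ℝ), (0:ℝ)))
    simpa using this
  have eL : (fun y : ℝ => dT u y t) = fun y : ℝ => G (y, t) (0, 1) := by
    funext y; exact dT_eq_fderiv hu y t
  have eR : (fun s : ℝ => dX u x s) = fun s : ℝ => G (x, s) (1, 0) := by
    funext s; exact dX_eq_fderiv hu x s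
  have hL : dX (dT u) x t = fderiv ℝ G (x, t) (1, 0) (0, 1) := by
    show deriv (fun y => dT u y t) x = _
    rw [eL]; exact hLx.deriv
  have hR : dT (dX u) x t = fderiv ℝ G (x, t) (0, 1) (1, 0) := by
    show deriv (fun s => dX u x s) t = _
    rw [eR]; exact hLt.deriv
  rw [hL, hR, hsym]


open Filter Metric

lemma deriv_zero_of_zero_on {g : ℝ → ℝ} {S : Set ℝ} {t : ℝ} (hS : S ∈ nhds t)
    (h : ∀ s ∈ S, g s = 0) : deriv g t = 0 := by
  have he : g =ᶠ[nhds t] (fun _ => (0:ℝ)) := eventually_of_mem hS h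
  rw [he.deriv_eq]; simp

lemma contX {g : ℝ → ℝ → ℝ} (hg : Continuous fun q : ℝ × ℝ => g q.1 q.2) (t : ℝ) :
    Continuous fun x => g x t :=
  hg.comp (continuous_id.prodMk continuous_const)

lemma hasDerivAt_integral_sq {g : ℝ → ℝ → ℝ}
    (hg : ContDiff ℝ (⊤ : ℕ∞) fun q : ℝ × ℝ => g q.1 q.2) (L t₀ : ℝ) :
    HasDerivAt (fun s => ∫ x in (0:ℝ)..L, (g x s) ^ 2)
      (∫ x in (0:ℝ)..L, 2 * g x t₀ * dT g x t₀) t₀ := by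
  have hgc : Continuous fun q : ℝ × ℝ => g q.1 q.2 := hg.continuous
  have hdTc : Continuous fun q : ℝ × ℝ => dT g q.1 q.2 := (contDiff_dT hg).continuous
  have hF'c : Continuous fun q : ℝ × ℝ => 2 * g q.1 q.2 * dT g q.1 q.2 := by
    continuity
  -- uniform bound on compact set
  obtain ⟨M, hM⟩ := ((isCompact_uIcc (a := (0:ℝ)) (b := L)).prod
      (isCompact_Icc (a := t₀ - 1) (b := t₀ + 1))).exists_bound_of_continuousOn
      hF'c.continuousOn
  have key := intervalIntegral.hasDerivAt_integral_of_dominated_loc_of_deriv_le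
    (F := fun s x => (g x s) ^ 2) (F' := fun s x => 2 * g x s * dT g x s)
    (x₀ := t₀) (a := 0) (b := L) (μ := volume) (bound := fun _ => M) (Metric.ball_mem_nhds t₀ one_pos)
    (Filter.Eventually.of_forall (fun s =>
      (((contX hgc s).pow 2).aestronglyMeasurable)))
    (((contX hgc t₀).pow 2).intervalIntegrable 0 L)
    ((contX (g := fun x s => 2 * g x s * dT g x s) hF'c t₀).aestronglyMeasurable)
    ?_ (intervalIntegrable_const) ?_
  · exact key.2
  · refine Filter.Eventually.of_forall (fun x hx s hs => ?_)
    have hx' : x ∈ uIcc (0:ℝ) L := uIoc_subset_uIcc hx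
    have hs' : s ∈ Icc (t₀ - 1) (t₀ + 1) := by
      have h1 : |s - t₀| < 1 := by
        have := mem_ball_iff_norm.mp hs
        rwa [Real.norm_eq_abs] at this
      have h2 := abs_lt.mp h1
      constructor <;> [linarith [h2.1]; linarith [h2.2]]
    exact hM (x, s) ⟨hx', hs'⟩
  · refine Filter.Eventually.of_forall (fun x hx s hs => ?_)
    have h := hasDerivAt_dT hg x s
    have := h.pow 2
    refine this.congr_deriv ?_
    push_cast; ring

end Stmt14

open Stmt14 Filter

/-- Higher-order energy identity for the structurally damped clamped–free
beam `w_tt + D∂ₓ⁴w + δ∂ₓ⁴w_t = f` on `(0,L) × (0,T)`: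
`d/dt [½∫₀^L w_xxt² + (D/2)∫₀^L (∂ₓ⁴w)²] + δ∫₀^L (∂ₓ⁴w_t)² = ∫₀^L f ∂ₓ⁴w_t` on `(0,T)`. -/
theorem statement14
    (D δ L T : ℝ) (hD : 0 < D) (hδ : 0 ≤ δ) (hL : 0 < L) (hT : 0 < T)
    (f : ℝ → ℝ → ℝ) (hf : Continuous fun q : ℝ × ℝ => f q.1 q.2)
    (w : ℝ → ℝ → ℝ) (hw : ContDiff ℝ (⊤ : ℕ∞) fun q : ℝ × ℝ => w q.1 q.2)
    (heq : ∀ x ∈ Ioo (0:ℝ) L, ∀ t ∈ Ioo (0:ℝ) T,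
      dT (dT w) x t + D * dX (dX (dX (dX w))) x t
        + δ * dX (dX (dX (dX (dT w)))) x t = f x t)
    (hclamped : ∀ t ∈ Icc (0:ℝ) T, w 0 t = 0 ∧ dX w 0 t = 0)
    (hfree : ∀ t ∈ Icc (0:ℝ) T, dX (dX w) L t = 0 ∧ dX (dX (dX w)) L t = 0) :
    ∀ t ∈ Ioo (0:ℝ) T,
      HasDerivAt (fun s =>
          (1 / 2) * (∫ x in (0:ℝ)..L, (dX (dX (dT w)) x s) ^ 2)
            + (D / 2) * (∫ x in (0:ℝ)..L, (dX (dX (dX (dX w))) x s) ^ 2))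
        ((∫ x in (0:ℝ)..L, f x t * dX (dX (dX (dX (dT w)))) x t)
          - δ * (∫ x in (0:ℝ)..L, (dX (dX (dX (dX (dT w)))) x t) ^ 2)) t := by
  intro t ht
  -- smoothness of all relevant partial derivatives (uncurried)
  have hw_x := contDiff_dX hw
  have hw_xx := contDiff_dX hw_x
  have hw_xxx := contDiff_dX hw_xx
  have hw_xxxx := contDiff_dX hw_xxx
  have hw_t := contDiff_dT hw
  have hw_tx := contDiff_dX hw_t
  have hw_txx := contDiff_dX hw_tx
  have hw_txxx := contDiff_dX hw_txx
  have hw_txxxx := contDiff_dX hw_txxx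
  have hw_tt := contDiff_dT hw_t
  have hw_ttx := contDiff_dX hw_tt
  have hw_ttxx := contDiff_dX hw_ttx
  -- commutation of partial derivatives
  have c0 : dX (dT w) = dT (dX w) := dX_dT_comm hw
  have c1 : dX (dT (dX w)) = dT (dX (dX w)) := dX_dT_comm hw_x
  have c2 : dX (dT (dX (dX w))) = dT (dX (dX (dX w))) := dX_dT_comm hw_xx
  have c3 : dX (dT (dX (dX (dX w)))) = dT (dX (dX (dX (dX w)))) := dX_dT_comm hw_xxx
  have d0 : dX (dT (dT w)) = dT (dX (dT w)) := dX_dT_comm hw_t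
  have d1 : dX (dT (dX (dT w))) = dT (dX (dX (dT w))) := dX_dT_comm hw_tx
  have e2 : dX (dX (dT w)) = dT (dX (dX w)) := by rw [c0, c1]
  have e3 : dX (dX (dX (dT w))) = dT (dX (dX (dX w))) := by rw [c0, c1, c2]
  have e4 : dX (dX (dX (dX (dT w)))) = dT (dX (dX (dX (dX w)))) := by rw [c0, c1, c2, c3]
  have g1 : dX (dT (dT w)) = dT (dT (dX w)) := by rw [d0, c0]
  have g2 : dX (dX (dT (dT w))) = dT (dX (dX (dT w))) := by rw [d0, d1]
  -- continuity of slices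
  have cX : ∀ {v : ℝ → ℝ → ℝ}, ContDiff ℝ (⊤ : ℕ∞) (fun q : ℝ × ℝ => v q.1 q.2) →
      Continuous fun x => v x t := fun h => contX h.continuous t
  have cf : Continuous fun x => f x t := contX hf t
  have hIcc : t ∈ Icc (0:ℝ) T := ⟨ht.1.le, ht.2.le⟩
  -- boundary values at time t
  have hP0 : dT (dT w) 0 t = 0 := by
    apply deriv_zero_of_zero_on (isOpen_Ioo.mem_nhds ht)
    intro s hs
    exact deriv_zero_of_zero_on (Icc_mem_nhds hs.1 hs.2) (fun r hr => (hclamped r hr).1)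
  have hdXP0 : dX (dT (dT w)) 0 t = 0 := by
    rw [g1]
    apply deriv_zero_of_zero_on (isOpen_Ioo.mem_nhds ht)
    intro s hs
    exact deriv_zero_of_zero_on (Icc_mem_nhds hs.1 hs.2) (fun r hr => (hclamped r hr).2)
  have hQL : dX (dX (dX (dT w))) L t = 0 := by
    rw [e3]
    exact deriv_zero_of_zero_on (Icc_mem_nhds ht.1 ht.2) (fun r hr => (hfree r hr).2)
  have hRL : dX (dX (dT w)) L t = 0 := by
    rw [e2]
    exact deriv_zero_of_zero_on (Icc_mem_nhds ht.1 ht.2) (fun r hr => (hfree r hr).1)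
  -- integration by parts (twice)
  have ibp1 : (∫ x in (0:ℝ)..L, dT (dT w) x t * dX (dX (dX (dX (dT w)))) x t)
      = - ∫ x in (0:ℝ)..L, dX (dT (dT w)) x t * dX (dX (dX (dT w))) x t := by
    have h := intervalIntegral.integral_mul_deriv_eq_deriv_mul
      (u := fun x => dT (dT w) x t) (u' := fun x => dX (dT (dT w)) x t)
      (v := fun x => dX (dX (dX (dT w))) x t) (v' := fun x => dX (dX (dX (dX (dT w)))) x t)
      (a := 0) (b := L)
      (fun x _ => hasDerivAt_dX hw_tt x t) (fun x _ => hasDerivAt_dX hw_txxx x t)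
      ((cX hw_ttx).intervalIntegrable 0 L) ((cX hw_txxxx).intervalIntegrable 0 L)
    beta_reduce at h
    rw [h, hQL, hP0]
    ring
  have ibp2 : (∫ x in (0:ℝ)..L, dX (dT (dT w)) x t * dX (dX (dX (dT w))) x t)
      = - ∫ x in (0:ℝ)..L, dX (dX (dT (dT w))) x t * dX (dX (dT w)) x t := by
    have h := intervalIntegral.integral_mul_deriv_eq_deriv_mul
      (u := fun x => dX (dT (dT w)) x t) (u' := fun x => dX (dX (dT (dT w))) x t)
      (v := fun x => dX (dX (dT w)) x t) (v' := fun x => dX (dX (dX (dT w))) x t)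
      (a := 0) (b := L)
      (fun x _ => hasDerivAt_dX hw_ttx x t) (fun x _ => hasDerivAt_dX hw_txx x t)
      ((cX hw_ttxx).intervalIntegrable 0 L) ((cX hw_txxx).intervalIntegrable 0 L)
    beta_reduce at h
    rw [h, hRL, hdXP0]
    ring
  -- PDE substitution
  have hne : ∀ᵐ x : ℝ, x ≠ L := by
    have h0 : (volume : Measure ℝ) {L} = 0 := measure_singleton L
    rw [ae_iff]
    simpa using h0
  have hPDE : (∫ x in (0:ℝ)..L, dT (dT w) x t * dX (dX (dX (dX (dT w)))) x t)
      = (∫ x in (0:ℝ)..L, f x t * dX (dX (dX (dX (dT w)))) x t)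
        - D * (∫ x in (0:ℝ)..L, dX (dX (dX (dX w))) x t * dX (dX (dX (dX (dT w)))) x t)
        - δ * (∫ x in (0:ℝ)..L, (dX (dX (dX (dX (dT w)))) x t) ^ 2) := by
    have step : (∫ x in (0:ℝ)..L, dT (dT w) x t * dX (dX (dX (dX (dT w)))) x t)
        = ∫ x in (0:ℝ)..L, (f x t * dX (dX (dX (dX (dT w)))) x t
            - D * (dX (dX (dX (dX w))) x t * dX (dX (dX (dX (dT w)))) x t)
            - δ * (dX (dX (dX (dX (dT w)))) x t) ^ 2) := by
      apply intervalIntegral.integral_congr_ae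
      filter_upwards [hne] with x hxne hxI
      rw [uIoc_of_le hL.le] at hxI
      have hxo : x ∈ Ioo (0:ℝ) L := ⟨hxI.1, lt_of_le_of_ne hxI.2 hxne⟩
      have := heq x hxo t ht
      rw [← this]
      ring
    rw [step]
    rw [intervalIntegral.integral_sub, intervalIntegral.integral_sub,
      intervalIntegral.integral_const_mul, intervalIntegral.integral_const_mul]
    · exact (cf.mul (cX hw_txxxx)).intervalIntegrable 0 L
    · exact (continuous_const.mul ((cX hw_xxxx).mul (cX hw_txxxx))).intervalIntegrable 0 L
    · exact ((cf.mul (cX hw_txxxx)).intervalIntegrable 0 L).sub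
        ((continuous_const.mul ((cX hw_xxxx).mul (cX hw_txxxx))).intervalIntegrable 0 L)
    · exact (continuous_const.mul ((cX hw_txxxx).pow 2)).intervalIntegrable 0 L
  -- Leibniz rule for both energy integrals
  have hA := hasDerivAt_integral_sq hw_txx L t
  have hB := hasDerivAt_integral_sq hw_xxxx L t
  have H := (hA.const_mul (1/2 : ℝ)).add (hB.const_mul (D/2 : ℝ))
  refine H.congr_deriv ?_
  -- it remains to identify the derivative values
  have pull : ∀ p q : ℝ → ℝ, (∫ x in (0:ℝ)..L, 2 * p x * q x)
      = 2 * ∫ x in (0:ℝ)..L, p x * q x := by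
    intro p q
    rw [← intervalIntegral.integral_const_mul]
    apply intervalIntegral.integral_congr
    intro x _
    ring
  rw [pull (fun x => dX (dX (dT w)) x t) (fun x => dT (dX (dX (dT w))) x t),
      pull (fun x => dX (dX (dX (dX w))) x t) (fun x => dT (dX (dX (dX (dX w)))) x t)]
  rw [← g2, ← e4]
  have swap : (∫ x in (0:ℝ)..L, dX (dX (dT w)) x t * dX (dX (dT (dT w))) x t)
      = ∫ x in (0:ℝ)..L, dX (dX (dT (dT w))) x t * dX (dX (dT w)) x t := by
    apply intervalIntegral.integral_congr
    intro x _
    ring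
  rw [swap]
  have key : (∫ x in (0:ℝ)..L, dX (dX (dT (dT w))) x t * dX (dX (dT w)) x t)
      = (∫ x in (0:ℝ)..L, f x t * dX (dX (dX (dX (dT w)))) x t)
        - D * (∫ x in (0:ℝ)..L, dX (dX (dX (dX w))) x t * dX (dX (dX (dX (dT w)))) x t)
        - δ * (∫ x in (0:ℝ)..L, (dX (dX (dX (dX (dT w)))) x t) ^ 2) := by
    rw [← hPDE, ibp1, ibp2]
    ring
  rw [key]
  ring
end
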